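/- Let A be a Noetherian ring and R a domain essentially of finite type over A. Suppose R is a simple D_A(R)-module (i.e., for every nonzero c ∈ R there exists ∂ ∈ D_A(R) with ∂(c) = 1). Then for every ideal I ⊆ R, the differential closure of I equals its radical: I^diff_A = √I. Conversely, if 0 ≠ I ⊆ R is a nonzero D_A(R)-submodule of R, then I^diff_A = R; hence √J = J^diff_A for all ideals J if and only if R is a simple D_A(R)-module. -/

import Mathlib

/-! A prime `p` is differentially closed when `R` is `D`-simple: if `c * r ^ n ∈ p^⟨n⟩` with
`r ∉ p`, the fact that `p^⟨n⟩` is `p`-primary gives `c ∈ p^⟨n⟩`, while some operator sends `c`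
to `1 ∉ p`. Intersecting over the primes containing `I` gives `I^diff ⊆ √I`. Conversely, `R` is
Noetherian, so `(√I)^m ⊆ I` for some `m`; as an operator of order `< n` only lowers the
`√I`-adic order by `n - 1`, `c = r ^ m` witnesses `r ∈ I^diff` for `r ∈ √I`. A nonzero
`D`-stable ideal `I` contains `c ≠ 0` with `c * r ^ n ∈ I^⟨n⟩` for all `r`, so `I^diff = R`;
applied to `D_A(R) · c` this forces `D_A(R) · c = R` when differential closures are radicals. -/

/-- `IsDiffOp A n φ` says that the `A`-linear endomorphism `φ` of `R` is an
`A`-linear differential operator of order at most `n`. -/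
def IsDiffOp (A : Type*) {R : Type*} [CommRing A] [CommRing R] [Algebra A R] :
    ℕ → (R →ₗ[A] R) → Prop
  | 0 => fun φ => ∃ r : R, φ = LinearMap.mulLeft A r
  | n + 1 => fun φ => ∀ a : R,
      IsDiffOp A n (φ ∘ₗ LinearMap.mulLeft A a - LinearMap.mulLeft A a ∘ₗ φ)

theorem isDiffOp_comp_mulLeft (A : Type*) {R : Type*} [CommRing A] [CommRing R]
    [Algebra A R] (x : R) (n : ℕ) :
    ∀ φ : R →ₗ[A] R, IsDiffOp A n φ → IsDiffOp A n (φ ∘ₗ LinearMap.mulLeft A x) := by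
  induction n with
  | zero =>
    rintro φ ⟨r, rfl⟩
    exact ⟨r * x, by ext y; simp [mul_assoc]⟩
  | succ n ih =>
    intro φ h a
    have h2 := ih _ (h a)
    have key : (φ ∘ₗ LinearMap.mulLeft A x) ∘ₗ LinearMap.mulLeft A a -
        LinearMap.mulLeft A a ∘ₗ (φ ∘ₗ LinearMap.mulLeft A x) =
        (φ ∘ₗ LinearMap.mulLeft A a - LinearMap.mulLeft A a ∘ₗ φ) ∘ₗ LinearMap.mulLeft A x := by
      ext y
      simp [mul_left_comm]
    rw [key]
    exact h2

/-- The `n`-th differential power of an ideal `I` of the `A`-algebra `R`: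
the set of `r ∈ R` such that `∂ r ∈ I` for every `A`-linear differential
operator `∂` of order at most `n - 1`. -/
def diffPow (A : Type*) {R : Type*} [CommRing A] [CommRing R] [Algebra A R]
    (n : ℕ) (I : Ideal R) : Ideal R where
  carrier := {r | ∀ φ : R →ₗ[A] R, IsDiffOp A (n - 1) φ → φ r ∈ I}
  add_mem' := fun hx hy φ hφ => by simp [map_add]; exact I.add_mem (hx φ hφ) (hy φ hφ)
  zero_mem' := fun φ _ => by simpa using I.zero_mem
  smul_mem' := fun c x hx => by
    intro φ hφ
    have := hx (φ ∘ₗ LinearMap.mulLeft A c) (isDiffOp_comp_mulLeft A c _ φ hφ)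
    simpa [smul_eq_mul] using this

/-- The differential closure of an ideal `I` with respect to `A`: elements `r`
such that `c * r ^ n ∈ I^⟨n⟩_A` for some fixed nonzero `c` and all `n ≫ 0`. -/
def diffClosure (A : Type*) {R : Type*} [CommRing A] [CommRing R] [Algebra A R]
    (I : Ideal R) : Set R :=
  {r | ∃ c : R, c ≠ 0 ∧ ∃ N : ℕ, ∀ n : ℕ, N ≤ n → c * r ^ n ∈ diffPow A n I}

namespace IsDiffOp

variable {A R : Type*} [CommRing A] [CommRing R] [Algebra A R]

theorem succ {n : ℕ} {φ : R →ₗ[A] R} (h : IsDiffOp A n φ) : IsDiffOp A (n + 1) φ := by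
  induction n generalizing φ with
  | zero =>
    obtain ⟨r, rfl⟩ := h
    exact fun a => ⟨0, by ext y; simp [mul_left_comm]⟩
  | succ n ih => exact fun a => ih (h a)

theorem mono {m n : ℕ} (hmn : m ≤ n) {φ : R →ₗ[A] R} (h : IsDiffOp A m φ) :
    IsDiffOp A n φ := by
  induction hmn with
  | refl => exact h
  | step _ ih => exact ih.succ

theorem add {n : ℕ} {φ ψ : R →ₗ[A] R} (hφ : IsDiffOp A n φ) (hψ : IsDiffOp A n ψ) :
    IsDiffOp A n (φ + ψ) := by
  induction n generalizing φ ψ with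
  | zero =>
    obtain ⟨r, rfl⟩ := hφ
    obtain ⟨s, rfl⟩ := hψ
    exact ⟨r + s, by ext y; simp [add_mul]⟩
  | succ n ih =>
    intro a
    have key : (φ + ψ) ∘ₗ LinearMap.mulLeft A a - LinearMap.mulLeft A a ∘ₗ (φ + ψ) =
        (φ ∘ₗ LinearMap.mulLeft A a - LinearMap.mulLeft A a ∘ₗ φ) +
          (ψ ∘ₗ LinearMap.mulLeft A a - LinearMap.mulLeft A a ∘ₗ ψ) := by
      ext y; simp; ring
    rw [key]
    exact ih (hφ a) (hψ a)

theorem mulLeft_comp (r : R) {n : ℕ} {φ : R →ₗ[A] R} (h : IsDiffOp A n φ) :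
    IsDiffOp A n (LinearMap.mulLeft A r ∘ₗ φ) := by
  induction n generalizing φ with
  | zero =>
    obtain ⟨s, rfl⟩ := h
    exact ⟨r * s, by ext y; simp⟩
  | succ n ih =>
    intro a
    have key : (LinearMap.mulLeft A r ∘ₗ φ) ∘ₗ LinearMap.mulLeft A a -
        LinearMap.mulLeft A a ∘ₗ (LinearMap.mulLeft A r ∘ₗ φ) =
        LinearMap.mulLeft A r ∘ₗ (φ ∘ₗ LinearMap.mulLeft A a - LinearMap.mulLeft A a ∘ₗ φ) := by
      ext y; simp [mul_left_comm, mul_sub]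
    rw [key]
    exact ih (h a)

theorem comp {i j : ℕ} {φ ψ : R →ₗ[A] R} (hφ : IsDiffOp A i φ) (hψ : IsDiffOp A j ψ) :
    IsDiffOp A (i + j) (φ ∘ₗ ψ) := by
  induction i generalizing j φ ψ with
  | zero =>
    obtain ⟨r, rfl⟩ := hφ
    rw [zero_add]
    exact hψ.mulLeft_comp r
  | succ i ihi =>
    induction j generalizing ψ with
    | zero =>
      obtain ⟨s, rfl⟩ := hψ
      exact isDiffOp_comp_mulLeft A s _ φ hφ
    | succ j ihj =>
      intro a
      have key : (φ ∘ₗ ψ) ∘ₗ LinearMap.mulLeft A a - LinearMap.mulLeft A a ∘ₗ (φ ∘ₗ ψ) =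
          φ ∘ₗ (ψ ∘ₗ LinearMap.mulLeft A a - LinearMap.mulLeft A a ∘ₗ ψ) +
            (φ ∘ₗ LinearMap.mulLeft A a - LinearMap.mulLeft A a ∘ₗ φ) ∘ₗ ψ := by
        ext y; simp
      rw [key]
      exact (ihj (hψ a)).add ((ihi (hφ a) hψ).mono (by omega))

theorem apply_mul_eq (φ : R →ₗ[A] R) (x y : R) :
    φ (x * y) = y * φ x + (φ ∘ₗ LinearMap.mulLeft A y - LinearMap.mulLeft A y ∘ₗ φ) x := by
  simp [mul_comm x y]

theorem apply_mem_pow_sub (J : Ideal R) {a : ℕ} {φ : R →ₗ[A] R} (hφ : IsDiffOp A a φ)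
    {b : ℕ} {x : R} (hx : x ∈ J ^ b) : φ x ∈ J ^ (b - a) := by
  induction b generalizing a φ x with
  | zero => simp
  | succ b ih =>
    cases a with
    | zero =>
      obtain ⟨r, rfl⟩ := hφ
      exact (J ^ (b + 1)).mul_mem_left r hx
    | succ a =>
      rw [pow_succ] at hx
      refine Submodule.mul_induction_on hx (fun z hz y hy => ?_) fun u v hu hv => ?_
      · rw [apply_mul_eq, Nat.succ_sub_succ]
        refine Ideal.add_mem _ ?_ (ih (hφ y) hz)
        have hyφz : y * φ z ∈ J ^ (b - (a + 1) + 1) := by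
          rw [pow_succ, mul_comm y]
          exact Ideal.mul_mem_mul (ih hφ hz) hy
        exact Ideal.pow_le_pow_right (by omega) hyφz
      · rw [map_add]
        exact Ideal.add_mem _ hu hv

theorem apply_mem_of_apply_mul_mem {p : Ideal R} (hp : p.IsPrime) {x y : R} (hy : y ∉ p)
    {d : ℕ} (h : ∀ ψ : R →ₗ[A] R, IsDiffOp A d ψ → ψ (x * y) ∈ p) {φ : R →ₗ[A] R}
    (hφ : IsDiffOp A d φ) : φ x ∈ p := by
  induction d generalizing φ with
  | zero =>
    obtain ⟨r, rfl⟩ := hφ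
    have hrxy := h (LinearMap.mulLeft A r) ⟨r, rfl⟩
    simp only [LinearMap.mulLeft_apply, ← mul_assoc] at hrxy ⊢
    exact (hp.mem_or_mem hrxy).resolve_right hy
  | succ d ih =>
    have hyφx : y * φ x ∈ p := by
      rw [eq_sub_of_add_eq (apply_mul_eq φ x y).symm]
      exact p.sub_mem (h φ hφ) (ih (fun ψ hψ => h ψ hψ.succ) (hφ y))
    exact (hp.mem_or_mem hyφx).resolve_left hy

end IsDiffOp

section

variable {A R : Type*} [CommRing A] [CommRing R] [Algebra A R]

theorem mem_diffPow {n : ℕ} {I : Ideal R} {x : R} :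
    x ∈ diffPow A n I ↔ ∀ φ : R →ₗ[A] R, IsDiffOp A (n - 1) φ → φ x ∈ I := Iff.rfl

/-- The `D_A(R)`-submodule `D_A(R) · c` of `R`. -/
def diffSpan (A : Type*) [CommRing A] [Algebra A R] (c : R) : Ideal R where
  carrier := {x | ∃ (i : ℕ) (φ : R →ₗ[A] R), IsDiffOp A i φ ∧ φ c = x}
  add_mem' := by
    rintro _ _ ⟨i, φ, hφ, rfl⟩ ⟨j, ψ, hψ, rfl⟩
    exact ⟨max i j, φ + ψ, (hφ.mono (le_max_left i j)).add (hψ.mono (le_max_right i j)), rfl⟩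
  zero_mem' := ⟨0, 0, ⟨0, by ext; simp⟩, rfl⟩
  smul_mem' := by
    rintro r _ ⟨i, φ, hφ, rfl⟩
    exact ⟨i, LinearMap.mulLeft A r ∘ₗ φ, hφ.mulLeft_comp r, rfl⟩

theorem self_mem_diffSpan (c : R) : c ∈ diffSpan A c :=
  ⟨0, LinearMap.mulLeft A 1, ⟨1, rfl⟩, by simp⟩

theorem IsDiffOp.apply_mem_diffSpan {c : R} {i : ℕ} {φ : R →ₗ[A] R} (hφ : IsDiffOp A i φ)
    {x : R} (hx : x ∈ diffSpan A c) : φ x ∈ diffSpan A c := by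
  obtain ⟨j, ψ, hψ, rfl⟩ := hx
  exact ⟨i + j, φ ∘ₗ ψ, hφ.comp hψ, rfl⟩

theorem diffClosure_subset_radical
    (hs : ∀ c : R, c ≠ 0 → ∃ (i : ℕ) (φ : R →ₗ[A] R), IsDiffOp A i φ ∧ φ c = 1)
    (I : Ideal R) : diffClosure A I ⊆ (I.radical : Set R) := by
  rintro r ⟨c, hc, N, hN⟩
  rw [SetLike.mem_coe, Ideal.radical_eq_sInf, Ideal.mem_sInf]
  rintro p ⟨hIp, hp⟩
  by_contra hr
  obtain ⟨i, φ, hφ, hφc⟩ := hs c hc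
  have hcr : ∀ ψ : R →ₗ[A] R, IsDiffOp A (N + i) ψ → ψ (c * r ^ (N + i + 1)) ∈ p :=
    fun ψ hψ => hIp (mem_diffPow.mp (hN _ (by omega)) ψ hψ)
  have hφc_mem : φ c ∈ p :=
    IsDiffOp.apply_mem_of_apply_mul_mem hp (fun h => hr (hp.mem_of_pow_mem _ h)) hcr
      (hφ.mono (Nat.le_add_left i N))
  exact hp.ne_top ((Ideal.eq_top_iff_one p).mpr (hφc ▸ hφc_mem))

theorem radical_subset_diffClosure [Nontrivial R] {I : Ideal R} (hI : I.radical.FG) :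
    (I.radical : Set R) ⊆ diffClosure A I := by
  intro r hr
  obtain ⟨m, hm⟩ := I.exists_radical_pow_le_of_fg hI
  by_cases hrm : r ^ m = 0
  · refine ⟨1, one_ne_zero, m, fun n hn => ?_⟩
    rw [pow_eq_zero_of_le hn hrm, mul_zero]
    exact zero_mem _
  · refine ⟨r ^ m, hrm, 0, fun n _ => mem_diffPow.mpr fun φ hφ => hm ?_⟩
    have hrmn : r ^ m * r ^ n ∈ I.radical ^ (m + n) := by
      rw [← pow_add]
      exact Ideal.pow_mem_pow hr _
    exact Ideal.pow_le_pow_right (by omega) (hφ.apply_mem_pow_sub I.radical hrmn)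

theorem diffClosure_eq_univ_of_ne_bot {I : Ideal R} (hI : I ≠ ⊥)
    (hst : ∀ (i : ℕ) (φ : R →ₗ[A] R), IsDiffOp A i φ → ∀ x ∈ I, φ x ∈ I) :
    diffClosure A I = Set.univ := by
  obtain ⟨c, hcI, hc⟩ := Submodule.exists_mem_ne_zero_of_ne_bot hI
  exact Set.eq_univ_of_forall fun r =>
    ⟨c, hc, 0, fun n _ φ hφ => hst _ φ hφ _ (I.mul_mem_right _ hcI)⟩

theorem exists_isDiffOp_apply_eq_one
    (h : ∀ J : Ideal R, diffClosure A J = (J.radical : Set R)) {c : R} (hc : c ≠ 0) :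
    ∃ (i : ℕ) (φ : R →ₗ[A] R), IsDiffOp A i φ ∧ φ c = 1 := by
  have hne : diffSpan A c ≠ ⊥ := fun hbot =>
    hc (by simpa [hbot] using self_mem_diffSpan (A := A) c)
  have hspan : diffClosure A (diffSpan A c) = Set.univ :=
    diffClosure_eq_univ_of_ne_bot hne fun _ _ hφ _ hx => hφ.apply_mem_diffSpan hx
  rw [h, Set.eq_univ_iff_forall] at hspan
  have htop : diffSpan A c = ⊤ := Ideal.radical_eq_top.mp (eq_top_iff.mpr fun x _ => hspan x)
  exact (Ideal.eq_top_iff_one _).mp htop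

end

/-- For `R` a domain essentially of finite type over a Noetherian ring `A`:
if `R` is a simple `D_A(R)`-module then differential closure equals radical;
any nonzero `D_A(R)`-submodule ideal has differential closure `R`; and
differential closure equals radical for all ideals iff `R` is `D`-simple. -/
theorem diffClosure_eq_radical_iff_simple {A R : Type*} [CommRing A]
    [IsNoetherianRing A] [CommRing R] [IsDomain R] [Algebra A R]
    [Algebra.EssFiniteType A R] :
    ((∀ c : R, c ≠ 0 → ∃ (i : ℕ) (φ : R →ₗ[A] R), IsDiffOp A i φ ∧ φ c = 1) →
        ∀ I : Ideal R, diffClosure A I = (I.radical : Set R)) ∧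
      (∀ I : Ideal R, I ≠ ⊥ →
        (∀ (i : ℕ) (φ : R →ₗ[A] R), IsDiffOp A i φ → ∀ x ∈ I, φ x ∈ I) →
        diffClosure A I = Set.univ) ∧
      ((∀ J : Ideal R, diffClosure A J = (J.radical : Set R)) ↔
        ∀ c : R, c ≠ 0 → ∃ (i : ℕ) (φ : R →ₗ[A] R), IsDiffOp A i φ ∧ φ c = 1) := by
  have := Algebra.EssFiniteType.isNoetherianRing A R
  have eq_radical_of_simple
      (hs : ∀ c : R, c ≠ 0 → ∃ (i : ℕ) (φ : R →ₗ[A] R), IsDiffOp A i φ ∧ φ c = 1)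
      (I : Ideal R) : diffClosure A I = (I.radical : Set R) :=
    (diffClosure_subset_radical hs I).antisymm
      (radical_subset_diffClosure (IsNoetherian.noetherian _))
  exact ⟨eq_radical_of_simple, fun _ hI hst => diffClosure_eq_univ_of_ne_bot hI hst,
    fun h _ hc => exists_isDiffOp_apply_eq_one h hc, eq_radical_of_simple⟩
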